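/- arXiv:2511.00799 — 2 statements merged into one kernel-verified Lean document; each statement's English description precedes it below -/
import Mathlib

section
/- Let A = ⊕_{m≥0} A_m be a commutative graded k-algebra over a field k that is an integral domain, and suppose there is a polynomial P ∈ ℚ[z] of degree n such that dim_k A_m ≤ P(m) for all sufficiently large m. Then the transcendence degree of the fraction field of A over k is at most n + 1. -/
/-!
Suppose `x₁, …, x_d ∈ K(A)` are algebraically independent and write `xᵢ = aᵢ / b` with `aᵢ, b`
in `A₀ ⊕ ⋯ ⊕ A_c`. For every `E`, the `(E + 1)^d` elements `b^(dE) · x^α` with `0 ≤ αᵢ ≤ E` are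
linearly independent over `k` and lie in `A₀ ⊕ ⋯ ⊕ A_(dEc)`, whose dimension is `O(E^(n+1))` by
the bound `dim A_m ≤ P(m)`. Hence `d ≤ n + 1`.
-/

open Module Finset

theorem Submodule.finrank_finset_sup_le {K V ι : Type*} [DivisionRing K] [AddCommGroup V]
    [Module K V] (s : Finset ι) (p : ι → Submodule K V) [∀ i, FiniteDimensional K (p i)] :
    finrank K (s.sup p : Submodule K V) ≤ ∑ i ∈ s, finrank K (p i) := by
  classical
  induction s using Finset.induction_on with
  | empty => simp
  | insert i s hi ih =>
    rw [Finset.sup_insert, Finset.sum_insert hi]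
    exact (Submodule.finrank_add_le_finrank_add_finrank _ _).trans (by omega)

theorem AlgebraicIndependent.linearIndependent_prod_pow {k L ι : Type*} [CommRing k]
    [CommRing L] [Algebra k L] [Fintype ι] {x : ι → L} (hx : AlgebraicIndependent k x) :
    LinearIndependent k (fun α : ι → ℕ => ∏ i, x i ^ α i) := by
  have := ((MvPolynomial.basisMonomials ι k).linearIndependent.map'
    (MvPolynomial.aeval x).toLinearMap (LinearMap.ker_eq_bot.mpr hx)).comp _
    Finsupp.equivFunOnFinite.symm.injective
  simpa [Function.comp_def, MvPolynomial.coe_basisMonomials, MvPolynomial.aeval_monomial,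
    Finsupp.prod_fintype] using this

theorem Polynomial.eval_le_sum_abs_coeff_mul_pow {R : Type*} [CommRing R] [LinearOrder R]
    [IsStrictOrderedRing R] (P : Polynomial R) {x : R} (hx : 0 ≤ x) :
    P.eval x ≤ (∑ i ∈ range (P.natDegree + 1), |P.coeff i|) * (x + 1) ^ P.natDegree := by
  rw [Polynomial.eval_eq_sum_range, Finset.sum_mul]
  refine Finset.sum_le_sum fun i hi => ?_
  have hx1 : 1 ≤ x + 1 := by linarith
  calc P.coeff i * x ^ i ≤ |P.coeff i| * x ^ i := by gcongr; exact le_abs_self _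
    _ ≤ |P.coeff i| * (x + 1) ^ P.natDegree := by
      gcongr
      calc x ^ i ≤ (x + 1) ^ i := by gcongr; linarith
        _ ≤ (x + 1) ^ P.natDegree := pow_le_pow_right₀ hx1 (by simpa [Nat.lt_succ_iff] using hi)

theorem exists_le_mul_pow_of_eventually_le_eval (f : ℕ → ℕ) (P : Polynomial ℚ)
    (hf : ∃ N : ℕ, ∀ m : ℕ, N ≤ m → (f m : ℚ) ≤ P.eval (m : ℚ)) :
    ∃ K : ℕ, ∀ m, f m ≤ K * (m + 1) ^ P.natDegree := by
  obtain ⟨N, hN⟩ := hf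
  set C := ∑ i ∈ range (P.natDegree + 1), |P.coeff i|
  refine ⟨⌈C⌉₊ + ∑ m ∈ range N, f m, fun m => ?_⟩
  have hpow : 1 ≤ (m + 1) ^ P.natDegree := Nat.one_le_pow _ _ (Nat.succ_pos m)
  rcases lt_or_ge m N with hm | hm
  · calc f m ≤ ∑ m ∈ range N, f m := single_le_sum (fun _ _ => Nat.zero_le _) (mem_range.2 hm)
      _ ≤ (⌈C⌉₊ + ∑ m ∈ range N, f m) * 1 := by omega
      _ ≤ _ := by gcongr
  · have : (f m : ℚ) ≤ ⌈C⌉₊ * ((m : ℚ) + 1) ^ P.natDegree :=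
      (hN m hm).trans <| (P.eval_le_sum_abs_coeff_mul_pow m.cast_nonneg).trans <| by
        gcongr; exact Nat.le_ceil C
    calc f m ≤ ⌈C⌉₊ * (m + 1) ^ P.natDegree := by exact_mod_cast this
      _ ≤ _ := by gcongr; omega

theorem sum_range_le_mul_pow {f : ℕ → ℕ} {K n : ℕ} (hf : ∀ m, f m ≤ K * (m + 1) ^ n) (M : ℕ) :
    ∑ m ∈ range (M + 1), f m ≤ K * (M + 1) ^ (n + 1) :=
  calc ∑ m ∈ range (M + 1), f m ≤ ∑ _m ∈ range (M + 1), K * (M + 1) ^ n :=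
        sum_le_sum fun m hm => (hf m).trans (by gcongr; simpa [Nat.lt_succ_iff] using hm)
    _ = K * (M + 1) ^ (n + 1) := by rw [sum_const, card_range, smul_eq_mul]; ring

theorem Nat.not_forall_pow_le_mul_pow {n d : ℕ} (hnd : n < d) (L : ℕ) :
    ¬ ∀ E : ℕ, (E + 1) ^ d ≤ L * (E + 1) ^ n := by
  intro h
  have hL : (L + 1) ^ n * (L + 1) ≤ (L + 1) ^ n * L := by
    rw [← pow_succ, mul_comm]; exact (Nat.pow_le_pow_right (by omega) hnd).trans (h L)
  have := Nat.le_of_mul_le_mul_left hL (by positivity)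
  omega

section degreeLE

variable {R A : Type*} [CommSemiring R] [Semiring A] [Algebra R A] (𝒜 : ℕ → Submodule R A)

noncomputable def degreeLE (D : ℕ) : Submodule R A := (range (D + 1)).sup 𝒜

variable {𝒜}

theorem degreeLE_mono {D E : ℕ} (h : D ≤ E) : degreeLE 𝒜 D ≤ degreeLE 𝒜 E :=
  sup_mono (range_subset_range.mpr (by omega))

theorem le_degreeLE {m D : ℕ} (h : m ≤ D) : 𝒜 m ≤ degreeLE 𝒜 D :=
  le_sup (mem_range.mpr (by omega))

theorem exists_mem_degreeLE [DirectSum.Decomposition 𝒜] (x : A) : ∃ D, x ∈ degreeLE 𝒜 D := by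
  have hx : x ∈ ⨆ m, 𝒜 m := by
    rw [(DirectSum.Decomposition.isInternal 𝒜).submodule_iSup_eq_top]; trivial
  obtain ⟨s, hs⟩ := Submodule.mem_iSup_iff_exists_finset.mp hx
  refine ⟨s.sup id, (iSup₂_le fun m hm => le_degreeLE ?_) hs⟩
  exact le_sup (f := id) hm

theorem exists_forall_mem_degreeLE [DirectSum.Decomposition 𝒜] {ι : Type*} [Finite ι]
    (a : ι → A) : ∃ D, ∀ i, a i ∈ degreeLE 𝒜 D := by
  choose D hD using fun i => exists_mem_degreeLE (𝒜 := 𝒜) (a i)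
  obtain ⟨D', hD'⟩ := Finite.exists_le D
  exact ⟨D', fun i => degreeLE_mono (hD' i) (hD i)⟩

variable [SetLike.GradedMonoid 𝒜]

theorem one_mem_degreeLE (D : ℕ) : (1 : A) ∈ degreeLE 𝒜 D :=
  le_degreeLE (Nat.zero_le D) SetLike.GradedOne.one_mem

theorem mul_mem_degreeLE {D E : ℕ} {x y : A} (hx : x ∈ degreeLE 𝒜 D) (hy : y ∈ degreeLE 𝒜 E) :
    x * y ∈ degreeLE 𝒜 (D + E) := by
  suffices degreeLE 𝒜 D * degreeLE 𝒜 E ≤ degreeLE 𝒜 (D + E) from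
    this (Submodule.mul_mem_mul hx hy)
  simp only [degreeLE, Finset.sup_eq_iSup, Submodule.iSup_mul, Submodule.mul_iSup, iSup_le_iff,
    mem_range]
  intro j hj i hi
  have hij : 𝒜 i * 𝒜 j ≤ 𝒜 (i + j) :=
    Submodule.mul_le.mpr fun _ ha _ hb => SetLike.mul_mem_graded ha hb
  exact le_iSup₂_of_le (i + j) (by omega) hij

theorem pow_mem_degreeLE {D : ℕ} {x : A} (hx : x ∈ degreeLE 𝒜 D) (j : ℕ) :
    x ^ j ∈ degreeLE 𝒜 (j * D) := by
  induction j with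
  | zero => simpa using one_mem_degreeLE 0
  | succ j ih => simpa [pow_succ, add_mul] using mul_mem_degreeLE ih hx

end degreeLE

theorem prod_mem_degreeLE {R A ι : Type*} [CommSemiring R] [CommSemiring A] [Algebra R A]
    {𝒜 : ℕ → Submodule R A} [SetLike.GradedMonoid 𝒜] (t : Finset ι) {a : ι → A} {D : ι → ℕ}
    (ha : ∀ i ∈ t, a i ∈ degreeLE 𝒜 (D i)) : ∏ i ∈ t, a i ∈ degreeLE 𝒜 (∑ i ∈ t, D i) := by
  classical
  induction t using Finset.induction_on with
  | empty => simpa using one_mem_degreeLE 0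
  | insert i t hi ih =>
    rw [prod_insert hi, sum_insert hi]
    exact mul_mem_degreeLE (ha i (mem_insert_self i t))
      (ih fun j hj => ha j (mem_insert_of_mem hj))

instance degreeLE.finite {R A : Type*} [CommRing R] [Ring A] [Algebra R A]
    (𝒜 : ℕ → Submodule R A) [∀ m, Module.Finite R (𝒜 m)] (D : ℕ) :
    Module.Finite R (degreeLE 𝒜 D) :=
  Submodule.finite_finset_sup _ _

theorem pow_card_le_sum_finrank {k A L ι : Type*} [Field k] [CommRing A] [Algebra k A]
    [CommRing L] [IsDomain L] [Algebra k L] [Algebra A L] [IsScalarTower k A L]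
    (𝒜 : ℕ → Submodule k A) [SetLike.GradedMonoid 𝒜] [∀ m, Module.Finite k (𝒜 m)]
    [Fintype ι] {x : ι → L} (hx : AlgebraicIndependent k x) {a : ι → A} {b : A}
    (hb : algebraMap A L b ≠ 0) (hab : ∀ i, algebraMap A L (a i) = algebraMap A L b * x i)
    {c : ℕ} (ha : ∀ i, a i ∈ degreeLE 𝒜 c) (hbc : b ∈ degreeLE 𝒜 c) (E : ℕ) :
    (E + 1) ^ Fintype.card ι ≤ ∑ m ∈ range (Fintype.card ι * E * c + 1), finrank k (𝒜 m) := by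
  classical
  set N := Fintype.card ι * E
  have hN (α : ι → Fin (E + 1)) : ∑ i, (α i : ℕ) ≤ N :=
    (sum_le_sum fun i _ => Nat.lt_succ_iff.mp (α i).isLt).trans (by simp [N])
  let y (α : ι → Fin (E + 1)) : A := b ^ (N - ∑ i, (α i : ℕ)) * ∏ i, a i ^ (α i : ℕ)
  have hy (α : ι → Fin (E + 1)) :
      algebraMap A L (y α) = algebraMap A L b ^ N * ∏ i, x i ^ (α i : ℕ) := by
    simp only [y, map_mul, map_pow, map_prod, hab, mul_pow, prod_mul_distrib,
      prod_pow_eq_pow_sum, ← mul_assoc, ← pow_add, Nat.sub_add_cancel (hN α)]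
  have hli : LinearIndependent k y := by
    refine LinearIndependent.of_comp (IsScalarTower.toAlgHom k A L).toLinearMap ?_
    have := (hx.linearIndependent_prod_pow.comp (fun (α : ι → Fin (E + 1)) i => (α i : ℕ))
      fun α β h => funext fun i => Fin.ext (congrFun h i)).map'
      (LinearMap.mulLeft k (algebraMap A L b ^ N))
      (LinearMap.ker_eq_bot.mpr (mul_right_injective₀ (pow_ne_zero _ hb)))
    simpa [Function.comp_def, hy] using this
  have hmem (α : ι → Fin (E + 1)) : y α ∈ degreeLE 𝒜 (N * c) := by
    have := mul_mem_degreeLE (pow_mem_degreeLE hbc (N - ∑ i, (α i : ℕ)))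
      (prod_mem_degreeLE univ fun i _ => pow_mem_degreeLE (ha i) (α i))
    rwa [← sum_mul, ← add_mul, Nat.sub_add_cancel (hN α)] at this
  calc (E + 1) ^ Fintype.card ι = Fintype.card (ι → Fin (E + 1)) := by simp
    _ ≤ finrank k (degreeLE 𝒜 (N * c)) :=
      (LinearIndependent.of_comp (degreeLE 𝒜 (N * c)).subtype
        (v := fun α => (⟨y α, hmem α⟩ : degreeLE 𝒜 (N * c))) hli).fintype_card_le_finrank
    _ ≤ _ := Submodule.finrank_finset_sup_le _ _

theorem stmt3_general (k A Frac : Type) [Field k] [CommRing A] [Algebra k A]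
    [Field Frac] [Algebra A Frac] [IsFractionRing A Frac]
    [Algebra k Frac] [IsScalarTower k A Frac]
    (𝒜 : ℕ → Submodule k A) [GradedAlgebra 𝒜]
    [∀ m, Module.Finite k (𝒜 m)]
    (n : ℕ) (P : Polynomial ℚ) (hP : P.natDegree = n)
    (hbound : ∃ N : ℕ, ∀ m : ℕ, N ≤ m →
      (Module.finrank k (𝒜 m) : ℚ) ≤ P.eval (m : ℚ))
    (s : Finset Frac)
    (hs : AlgebraicIndependent k (fun x : (s : Set Frac) => x.val)) :
    s.card ≤ n + 1 := by
  by_contra! hcard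
  obtain ⟨b, hab⟩ := IsLocalization.exist_integer_multiples_of_finite (nonZeroDivisors A)
    (fun x : (s : Set Frac) => x.val)
  choose a ha using hab
  obtain ⟨c, hc⟩ :=
    exists_forall_mem_degreeLE (𝒜 := 𝒜) (fun o : Option (s : Set Frac) => o.elim b a)
  obtain ⟨K, hK⟩ := exists_le_mul_pow_of_eventually_le_eval _ P hbound
  refine Nat.not_forall_pow_le_mul_pow hcard (K * (s.card * c + 1) ^ (n + 1)) fun E => ?_
  calc (E + 1) ^ s.card
      ≤ ∑ m ∈ range (s.card * E * c + 1), finrank k (𝒜 m) := by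
        simpa using pow_card_le_sum_finrank 𝒜 hs (a := a) (b := b)
          (IsLocalization.map_units Frac b).ne_zero (fun i => by rw [ha i, Algebra.smul_def])
          (fun i => hc (some i)) (hc none) E
    _ ≤ K * (s.card * E * c + 1) ^ (n + 1) := hP ▸ sum_range_le_mul_pow hK _
    _ ≤ K * ((s.card * c + 1) * (E + 1)) ^ (n + 1) := by gcongr; nlinarith
    _ = K * (s.card * c + 1) ^ (n + 1) * (E + 1) ^ (n + 1) := by rw [mul_pow, mul_assoc]

/-- Let `A = ⊕_{m ≥ 0} A_m` be a commutative graded `k`-algebra which is an integral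
domain, with each graded piece finite-dimensional over `k`.  Suppose there is a
polynomial `P ∈ ℚ[z]` of degree `n` with `dim_k A_m ≤ P(m)` for all sufficiently large
`m`.  Then the transcendence degree of the fraction field `Frac` of `A` over `k` is at
most `n + 1`, i.e. every finite algebraically independent subset of `Frac` over `k`
has at most `n + 1` elements. -/
theorem stmt3 (k A Frac : Type) [Field k] [CommRing A] [IsDomain A] [Algebra k A]
    [Field Frac] [Algebra A Frac] [IsFractionRing A Frac]
    [Algebra k Frac] [IsScalarTower k A Frac]
    (𝒜 : ℕ → Submodule k A) [GradedAlgebra 𝒜]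
    [∀ m, Module.Finite k (𝒜 m)]
    (n : ℕ) (P : Polynomial ℚ) (hP : P.natDegree = n)
    (hbound : ∃ N : ℕ, ∀ m : ℕ, N ≤ m →
      (Module.finrank k (𝒜 m) : ℚ) ≤ P.eval (m : ℚ))
    (s : Finset Frac)
    (hs : AlgebraicIndependent k (fun x : (s : Set Frac) => x.val)) :
    s.card ≤ n + 1 :=
  stmt3_general k A Frac 𝒜 n P hP hbound s hs
end

section
/- Let k be a field and A = ⊕_{m≥0} A_m a graded k-algebra domain with fraction field K(A). Suppose s_0, ..., s_r ∈ A_{m_0} are homogeneous elements of the same degree m_0 > 0 with s_0 ≠ 0, such that the ratios ξ_i = s_i/s_0 (1 ≤ i ≤ r) are algebraically independent over k in K(A). Then s_0, s_1, ..., s_r are algebraically independent over k in K(A). -/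
/-!
Let `P(s₀, …, s_r) = 0` and split `P` into homogeneous components `P_d`. Each `P_d(s)` lies in
`A_{d m₀}`, and these pieces are distinct because `m₀ > 0`, so every `P_d(s)` vanishes. By
homogeneity `P_d(s) = s₀ ^ d * P_d(1, ξ)`, hence `P_d(1, ξ) = 0`, and the independence of the `ξ`
kills the dehomogenization `P_d(1, X₁, …, X_r)`. A homogeneous polynomial is recovered from its
dehomogenization, `P_d(X) = X₀ ^ d * P_d(1, X₁ / X₀, …, X_r / X₀)`, so `P_d = 0`.
-/

open MvPolynomial

namespace MvPolynomial

section CommSemiring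

variable {R σ : Type*} [CommSemiring R] {φ : MvPolynomial σ R} {n : ℕ}

theorem IsHomogeneous.aeval_smul {S : Type*} [CommSemiring S] [Algebra R S]
    (hφ : φ.IsHomogeneous n) (c : S) (x : σ → S) :
    MvPolynomial.aeval (c • x) φ = c ^ n * MvPolynomial.aeval x φ := by
  conv_lhs => rw [φ.as_sum, map_sum]
  conv_rhs => rw [φ.as_sum, map_sum, Finset.mul_sum]
  refine Finset.sum_congr rfl fun d hd => ?_
  rw [aeval_monomial, aeval_monomial]
  simp only [Pi.smul_apply, smul_eq_mul, mul_pow, Finset.prod_mul_distrib,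
    Finset.prod_pow_eq_pow_sum, ← hφ.degree_eq_sum_deg_support hd, Finsupp.prod]
  ring

theorem IsHomogeneous.aeval_mem_graded {A : Type*} [CommSemiring A] [Algebra R A]
    (𝒜 : ℕ → Submodule R A) [SetLike.GradedMonoid 𝒜] (hφ : φ.IsHomogeneous n) {m : ℕ}
    {x : σ → A} (hx : ∀ i, x i ∈ 𝒜 m) : MvPolynomial.aeval x φ ∈ 𝒜 (n * m) := by
  rw [φ.as_sum, map_sum]
  refine Submodule.sum_mem _ fun d hd => ?_
  rw [aeval_monomial, ← Algebra.smul_def, Finsupp.prod]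
  refine Submodule.smul_mem _ _ ?_
  convert SetLike.prod_pow_mem_graded 𝒜 (fun _ => m) x d (fun i _ => hx i) using 2
  simp [hφ.degree_eq_sum_deg_support hd, Finset.sum_mul]

theorem decompose_aeval {A : Type*} [CommSemiring A] [Algebra R A]
    (𝒜 : ℕ → Submodule R A) [GradedAlgebra 𝒜] {m : ℕ} (hm : 0 < m)
    {x : σ → A} (hx : ∀ i, x i ∈ 𝒜 m) (φ : MvPolynomial σ R) (n : ℕ) :
    (DirectSum.decompose 𝒜 (aeval x φ) (n * m) : A) = aeval x (homogeneousComponent n φ) := by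
  conv_lhs => rw [← sum_homogeneousComponent φ]
  rw [map_sum, DirectSum.decompose_sum, DFinsupp.finsetSum_apply,
    AddSubmonoidClass.coe_finsetSum]
  have hmem (j : ℕ) : aeval x (homogeneousComponent j φ) ∈ 𝒜 (j * m) :=
    (homogeneousComponent_isHomogeneous j φ).aeval_mem_graded 𝒜 hx
  refine (Finset.sum_eq_single n (fun j _ hjn => ?_) fun hn => ?_).trans
    (DirectSum.decompose_of_mem_same 𝒜 (hmem n))
  · exact DirectSum.decompose_of_mem_ne 𝒜 (hmem j) (by simpa [hm.ne'] using hjn)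
  · rw [homogeneousComponent_eq_zero _ _ (by simpa [Nat.lt_succ_iff] using hn), map_zero,
      DirectSum.decompose_zero, DirectSum.zero_apply, ZeroMemClass.coe_zero]

end CommSemiring

section Dehomogenization

variable {R : Type*} [CommRing R] [IsDomain R] {r n : ℕ} {φ : MvPolynomial (Fin (r + 1)) R}

theorem IsHomogeneous.eq_zero_of_aeval_cons_one (hφ : φ.IsHomogeneous n)
    (h : MvPolynomial.aeval (Fin.cons 1 X : Fin (r + 1) → MvPolynomial (Fin r) R) φ = 0) :
    φ = 0 := by
  let K := FractionRing (MvPolynomial (Fin (r + 1)) R)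
  let x : Fin (r + 1) → K := fun i => algebraMap (MvPolynomial (Fin (r + 1)) R) K (X i)
  have hx0 : x 0 ≠ 0 := by simp [x, X_ne_zero]
  have hx : x = x 0 • (Fin.cons 1 fun j => x j.succ / x 0 : Fin (r + 1) → K) := by
    ext i
    cases i using Fin.cases <;> simp [mul_div_cancel₀ _ hx0]
  refine (map_eq_zero_iff _ (IsFractionRing.injective _ K)).1 ?_
  calc algebraMap _ K φ = IsScalarTower.toAlgHom R _ K (MvPolynomial.aeval X φ) := by
        rw [aeval_X_left_apply]; rfl
    _ = MvPolynomial.aeval x φ := comp_aeval_apply _ _ _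
    _ = x 0 ^ n * MvPolynomial.aeval (fun j => x j.succ / x 0)
          (MvPolynomial.aeval (Fin.cons 1 X : Fin (r + 1) → MvPolynomial (Fin r) R) φ) := by
        conv_lhs => rw [hx]
        rw [hφ.aeval_smul, comp_aeval_apply]
        congr 2
        ext i
        cases i using Fin.cases <;> simp
    _ = 0 := by rw [h, map_zero, mul_zero]

theorem IsHomogeneous.eq_zero_of_aeval_smul_cons_one {K : Type*} [CommRing K] [IsDomain K]
    [Algebra R K] (hφ : φ.IsHomogeneous n) {y : Fin r → K} (hy : AlgebraicIndependent R y)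
    {t : K} (ht : t ≠ 0) (h : MvPolynomial.aeval (t • (Fin.cons 1 y : Fin (r + 1) → K)) φ = 0) :
    φ = 0 := by
  rw [hφ.aeval_smul] at h
  refine hφ.eq_zero_of_aeval_cons_one (hy.eq_zero_of_aeval_eq_zero _ ?_)
  rw [comp_aeval_apply, ← (mul_eq_zero.1 h).resolve_left (pow_ne_zero n ht)]
  congr 1
  ext i
  cases i using Fin.cases <;> simp

end Dehomogenization

end MvPolynomial

/-- Let `A` be a graded `k`-algebra domain with fraction field `Frac`, and let
`s_0, …, s_r` be homogeneous elements of the same degree `m₀ > 0` with `s_0 ≠ 0`.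
If the ratios `ξ_i = s_i / s_0` (for `1 ≤ i ≤ r`) are algebraically independent over
`k` in `Frac`, then `s_0, s_1, …, s_r` are algebraically independent over `k`. -/
theorem stmt8 (k A Frac : Type) [Field k] [CommRing A] [IsDomain A] [Algebra k A]
    [Field Frac] [Algebra A Frac] [IsFractionRing A Frac]
    [Algebra k Frac] [IsScalarTower k A Frac]
    (𝒜 : ℕ → Submodule k A) [GradedAlgebra 𝒜]
    (r m₀ : ℕ) (hm₀ : 0 < m₀)
    (s : Fin (r + 1) → A)
    (hhom : ∀ i, s i ∈ 𝒜 m₀) (hs0 : s 0 ≠ 0)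
    (hξ : AlgebraicIndependent k
      (fun i : Fin r => algebraMap A Frac (s i.succ) / algebraMap A Frac (s 0))) :
    AlgebraicIndependent k (fun i : Fin (r + 1) => algebraMap A Frac (s i)) := by
  have hι : Function.Injective (algebraMap A Frac) := IsFractionRing.injective A Frac
  have hs0' : algebraMap A Frac (s 0) ≠ 0 := (map_ne_zero_iff _ hι).2 hs0
  have aeval_map (P : MvPolynomial (Fin (r + 1)) k) :
      aeval (fun i => algebraMap A Frac (s i)) P = algebraMap A Frac (aeval s P) :=
    (comp_aeval_apply s (IsScalarTower.toAlgHom k A Frac) P).symm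
  have hs : (fun i => algebraMap A Frac (s i)) = algebraMap A Frac (s 0) •
      (Fin.cons 1 fun i : Fin r => algebraMap A Frac (s i.succ) / algebraMap A Frac (s 0) :
        Fin (r + 1) → Frac) := by
    ext i
    cases i using Fin.cases <;> simp [mul_div_cancel₀ _ hs0']
  refine algebraicIndependent_iff.2 fun P hP => ?_
  have hPA : aeval s P = 0 := hι (by rw [← aeval_map, hP, map_zero])
  rw [← sum_homogeneousComponent P]
  refine Finset.sum_eq_zero fun d _ =>
    (homogeneousComponent_isHomogeneous d P).eq_zero_of_aeval_smul_cons_one hξ hs0' ?_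
  rw [← hs, aeval_map, ← decompose_aeval 𝒜 hm₀ hhom, hPA]
  simp
end
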